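/- arXiv:1910.09248 — 5 statements merged into one kernel-verified Lean document; each statement's English description precedes it below -/
import Mathlib

section
/- A point s' ∈ X satisfies D_∞(s') = 0 if and only if there exists t' ∈ ℝ with t_i = t' + ρ(r_i, s') for all i ∈ I, i.e. s' is a solution of the sound ranging problem. -/
open Set Bornology

lemma Real.iSup_eq_zero_iff_of_nonneg {ι : Type*} {f : ι → ℝ} (hf0 : ∀ i, 0 ≤ f i)
    (hf : BddAbove (range f)) : ⨆ i, f i = 0 ↔ ∀ i, f i = 0 :=
  ⟨fun h i => le_antisymm (h ▸ le_ciSup hf i) (hf0 i), fun h => by simp [h]⟩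

lemma iSup_abs_sub_eq_zero_iff {ι : Type*} {f : ι → ℝ} (hf : IsBounded (range f)) :
    (⨆ p : ι × ι, |f p.1 - f p.2|) = 0 ↔ ∀ i j, f i = f j := by
  obtain ⟨C, hC⟩ := Metric.isBounded_range_iff.1 hf
  have hbdd : BddAbove (range fun p : ι × ι => |f p.1 - f p.2|) :=
    ⟨C, forall_mem_range.2 fun p => (Real.dist_eq _ _).symm.trans_le (hC p.1 p.2)⟩
  rw [Real.iSup_eq_zero_iff_of_nonneg (fun _ => abs_nonneg _) hbdd]
  simp only [Prod.forall, abs_eq_zero, sub_eq_zero]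

lemma exists_forall_eq_iff {ι α : Type*} [Nonempty α] {f : ι → α} :
    (∃ c, ∀ i, f i = c) ↔ ∀ i j, f i = f j := by
  refine ⟨fun ⟨c, hc⟩ i j => (hc i).trans (hc j).symm, fun h => ?_⟩
  rcases isEmpty_or_nonempty ι with _ | ⟨⟨i₀⟩⟩
  · exact ⟨Classical.arbitrary α, isEmptyElim⟩
  · exact ⟨f i₀, fun i => h i i₀⟩

theorem stmt4_general {X I : Type*} [MetricSpace X] (s s' : X) (t0 : ℝ)
    (rs : I → X)
    (t : I → ℝ) (ht : ∀ i, t i = t0 + dist (rs i) s) :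
    (⨆ p : I × I,
        |(t p.1 - dist s' (rs p.1)) - (t p.2 - dist s' (rs p.2))|) = 0 ↔
      ∃ t' : ℝ, ∀ i, t i = t' + dist (rs i) s' := by
  -- Boundedness of `τ` keeps the real supremum away from its junk value on unbounded families.
  let τ : I → ℝ := fun i => t i - dist s' (rs i)
  have hτ : IsBounded (range τ) := by
    refine (Metric.isBounded_iff_subset_closedBall t0).2 ⟨dist s s', ?_⟩
    rintro _ ⟨i, rfl⟩
    have hτi : τ i - t0 = dist s (rs i) - dist s' (rs i) := by
      simp only [τ, ht i, dist_comm (rs i)]; ring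
    rw [Metric.mem_closedBall, Real.dist_eq, hτi]
    exact abs_dist_sub_le s s' (rs i)
  refine (iSup_abs_sub_eq_zero_iff hτ).trans (exists_forall_eq_iff.symm.trans ?_)
  simp only [τ, sub_eq_iff_eq_add, dist_comm s']

theorem stmt4 {X I : Type*} [MetricSpace X] [Nonempty I] (s s' : X) (t0 : ℝ)
    (rs : I → X) (hb : Bornology.IsBounded (Set.range rs))
    (t : I → ℝ) (ht : ∀ i, t i = t0 + dist (rs i) s) :
    (⨆ p : I × I,
        |(t p.1 - dist s' (rs p.1)) - (t p.2 - dist s' (rs p.2))|) = 0 ↔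
      ∃ t' : ℝ, ∀ i, t i = t' + dist (rs i) s' :=
  stmt4_general s s' t0 rs t ht
end

section
/- If the index set I is countable and (p_i)_{i∈I} is a probability distribution with all p_i > 0, then D_1(s') = 0 if and only if s' is a solution of the sound ranging problem, where D_1(x) = Σ_i p_i |τ_i(x) − Σ_j p_j τ_j(x)|. -/
/-! The deviations `τ_i(s') - Σ_j p_j τ_j(s')` enter `D_1(s')` with positive weights, so `D_1(s') = 0`
exactly when every `τ_i(s') = t_i - ρ(s', r_i)` equals one common value `t'`, which is the
statement that `s'` together with the emission time `t'` solves the sound ranging problem. -/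

namespace SoundRanging

variable {I : Type*}

noncomputable def weightedMean (p f : I → ℝ) : ℝ := ∑' j, p j * f j

noncomputable def meanAbsDeviation (p f : I → ℝ) : ℝ := ∑' i, p i * |f i - weightedMean p f|

theorem weightedMean_const {p : I → ℝ} (hp1 : ∑' i, p i = 1) (c : ℝ) :
    weightedMean p (fun _ => c) = c := by
  rw [weightedMean, tsum_mul_right, hp1, one_mul]

theorem meanAbsDeviation_eq_zero_iff {p f : I → ℝ} (hp : ∀ i, 0 < p i) (hp1 : ∑' i, p i = 1)
    (hsum : Summable fun i => p i * |f i - weightedMean p f|) :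
    meanAbsDeviation p f = 0 ↔ ∃ c, ∀ i, f i = c := by
  have hnonneg : ∀ i, 0 ≤ p i * |f i - weightedMean p f| :=
    fun i => mul_nonneg (hp i).le (abs_nonneg _)
  rw [meanAbsDeviation, ← hsum.hasSum_iff, hasSum_zero_iff_of_nonneg hnonneg]
  constructor
  · intro hzero
    refine ⟨weightedMean p f, fun i => ?_⟩
    have hi := congrFun hzero i
    simp only [Pi.zero_apply, mul_eq_zero, (hp i).ne', false_or, abs_eq_zero, sub_eq_zero] at hi
    exact hi
  · rintro ⟨c, hc⟩
    obtain rfl : f = fun _ => c := funext hc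
    ext i
    simp [weightedMean_const hp1]

end SoundRanging

theorem stmt5_general {X I : Type*} [MetricSpace X]
    (s' : X)
    (rs : I → X)
    (t : I → ℝ)
    (p : I → ℝ) (hp : ∀ i, 0 < p i) (hp1 : ∑' i, p i = 1)
    (hsum' : ∀ z : X, Summable fun i =>
      p i * |(t i - dist z (rs i)) - ∑' j, p j * (t j - dist z (rs j))|) :
    (∑' i, p i * |(t i - dist s' (rs i)) -
        ∑' j, p j * (t j - dist s' (rs j))|) = 0 ↔
      ∃ t' : ℝ, ∀ i, t i = t' + dist (rs i) s' := by
  refine (SoundRanging.meanAbsDeviation_eq_zero_iff hp hp1 (hsum' s')).trans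
    (exists_congr fun t' => forall_congr' fun i => ?_)
  rw [dist_comm]
  constructor <;> intro h <;> linarith

theorem stmt5 {X I : Type*} [MetricSpace X] [Countable I] [Nonempty I]
    (s s' : X) (t0 : ℝ)
    (rs : I → X) (hb : Bornology.IsBounded (Set.range rs))
    (t : I → ℝ) (ht : ∀ i, t i = t0 + dist (rs i) s)
    (p : I → ℝ) (hp : ∀ i, 0 < p i) (hp1 : ∑' i, p i = 1)
    (hsum : ∀ z : X, Summable fun i => p i * (t i - dist z (rs i)))
    (hsum' : ∀ z : X, Summable fun i =>
      p i * |(t i - dist z (rs i)) - ∑' j, p j * (t j - dist z (rs j))|) :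
    (∑' i, p i * |(t i - dist s' (rs i)) -
        ∑' j, p j * (t j - dist s' (rs j))|) = 0 ↔
      ∃ t' : ℝ, ∀ i, t i = t' + dist (rs i) s' :=
  stmt5_general s' rs t p hp hp1 hsum'
end

section
/- In l², with sensors R = {±e_i : i ∈ ℕ} (the standard basis vectors and their negatives), source s = 0 and t_0 = 0 (so t_i = 1 for all sensors), the point x_n with coordinates x_j^{(n)} = 1/√n for j ≤ n and 0 otherwise lies on the unit sphere and satisfies D_∞(x_n) = √(2 + 2/√n) − √(2 − 2/√n), which tends to 0 as n → ∞. -/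
/-!
For unit vectors `x`, `u` one has `‖x - u‖ = √(2 - 2⟪x, u⟫)`. Every sensor `±eᵢ` is a unit vector
whose inner product with the unit vector `xₙ` lies in `[-1/√n, 1/√n]`, with both ends attained
at `∓e₀`. So the distances from `xₙ` to the sensors range exactly over `[√(2 - 2/√n), √(2 + 2/√n)]`,
and the largest difference of two time residuals is the length of that interval, which tends to
`√2 - √2 = 0`.
-/

noncomputable def l2e (i : ℕ) : lp (fun _ : ℕ => ℝ) 2 := lp.single 2 i 1

noncomputable def l2x (n : ℕ) : lp (fun _ : ℕ => ℝ) 2 :=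
  ∑ i ∈ Finset.range n, lp.single 2 i (1 / Real.sqrt n)

/-- The sensor set R = {±e_i}. -/
def sensors : Set (lp (fun _ : ℕ => ℝ) 2) := {u | ∃ i : ℕ, u = l2e i ∨ u = -l2e i}

open RealInnerProductSpace Filter Topology

section UnitVectors

variable {E : Type*} [NormedAddCommGroup E] [InnerProductSpace ℝ E] {x u : E}

theorem norm_sub_eq_sqrt_of_norm_eq_one (hx : ‖x‖ = 1) (hu : ‖u‖ = 1) :
    ‖x - u‖ = √(2 - 2 * ⟪x, u⟫) := by
  rw [← Real.sqrt_sq (norm_nonneg (x - u)), norm_sub_sq_real, hx, hu]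
  ring_nf

theorem norm_sub_mem_Icc_of_abs_inner_le (hx : ‖x‖ = 1) (hu : ‖u‖ = 1) {c : ℝ}
    (hc : |⟪x, u⟫| ≤ c) : ‖x - u‖ ∈ Set.Icc (√(2 - 2 * c)) (√(2 + 2 * c)) := by
  obtain ⟨hlo, hhi⟩ := abs_le.mp hc
  rw [norm_sub_eq_sqrt_of_norm_eq_one hx hu]
  exact ⟨Real.sqrt_le_sqrt (by linarith), Real.sqrt_le_sqrt (by linarith)⟩

end UnitVectors

theorem ciSup_abs_sub_eq_of_isLeast_of_isGreatest {ι : Type*} {f : ι → ℝ} {m M : ℝ}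
    (hm : IsLeast (Set.range f) m) (hM : IsGreatest (Set.range f) M) :
    ⨆ p : ι × ι, |f p.1 - f p.2| = M - m := by
  obtain ⟨⟨i, rfl⟩, hi⟩ := hm
  obtain ⟨⟨j, rfl⟩, hj⟩ := hM
  have : Nonempty ι := ⟨i⟩
  have hbound : ∀ p : ι × ι, |f p.1 - f p.2| ≤ f j - f i := fun p =>
    abs_sub_le_iff.mpr ⟨by linarith [hj ⟨p.1, rfl⟩, hi ⟨p.2, rfl⟩],
      by linarith [hj ⟨p.2, rfl⟩, hi ⟨p.1, rfl⟩]⟩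
  refine le_antisymm (ciSup_le hbound) ?_
  calc f j - f i = |f (j, i).1 - f (j, i).2| := (abs_of_nonneg (by linarith [hj ⟨i, rfl⟩])).symm
    _ ≤ _ := le_ciSup ⟨_, Set.forall_mem_range.mpr hbound⟩ (j, i)

theorem l2x_apply (n i : ℕ) : l2x n i = if i < n then 1 / √n else 0 := by
  rw [l2x, lp.coeFn_sum, Finset.sum_apply]
  simp [lp.single_apply, Pi.single_apply]

theorem norm_l2x {n : ℕ} (hn : 0 < n) : ‖l2x n‖ = 1 := by
  have h : ‖l2x n‖ ^ 2 = 1 := by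
    simpa [l2x, hn.ne'] using lp.norm_sum_single (E := fun _ : ℕ => ℝ) (p := 2) (by norm_num)
      (fun _ => 1 / √n) (Finset.range n)
  exact (pow_eq_one_iff_of_nonneg (norm_nonneg _) two_ne_zero).mp h

theorem inner_l2x_l2e (n i : ℕ) : ⟪l2x n, l2e i⟫ = if i < n then 1 / √n else 0 := by
  simp [l2e, lp.inner_single_right, l2x_apply]

theorem norm_l2e (i : ℕ) : ‖l2e i‖ = 1 := by
  simp [l2e]

theorem norm_eq_one_of_mem_sensors {u : lp (fun _ : ℕ => ℝ) 2} (hu : u ∈ sensors) : ‖u‖ = 1 := by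
  obtain ⟨i, rfl | rfl⟩ := hu <;> simp [norm_l2e]

theorem abs_inner_l2x_le_of_mem_sensors (n : ℕ) {u : lp (fun _ : ℕ => ℝ) 2} (hu : u ∈ sensors) :
    |⟪l2x n, u⟫| ≤ 1 / √n := by
  obtain ⟨i, rfl | rfl⟩ := hu <;>
    simp only [inner_neg_right, abs_neg, inner_l2x_l2e] <;> split_ifs <;>
    simp [abs_of_nonneg (Real.sqrt_nonneg _)]

theorem isLeast_isGreatest_norm_l2x_sub_sensors {n : ℕ} (hn : 0 < n) :
    IsLeast (Set.range fun u : sensors => ‖l2x n - u‖) √(2 - 2 / √n) ∧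
      IsGreatest (Set.range fun u : sensors => ‖l2x n - u‖) √(2 + 2 / √n) := by
  have hbounds (u : sensors) : ‖l2x n - u‖ ∈ Set.Icc √(2 - 2 / √n) √(2 + 2 / √n) := by
    simpa only [mul_one_div] using norm_sub_mem_Icc_of_abs_inner_le (norm_l2x hn)
      (norm_eq_one_of_mem_sensors u.2) (abs_inner_l2x_le_of_mem_sensors n u.2)
  have he : l2e 0 ∈ sensors := ⟨0, .inl rfl⟩
  have hne : -l2e 0 ∈ sensors := ⟨0, .inr rfl⟩
  refine ⟨⟨⟨⟨_, he⟩, ?_⟩, ?_⟩, ⟨⟨⟨_, hne⟩, ?_⟩, ?_⟩⟩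
  · show ‖l2x n - l2e 0‖ = _
    rw [norm_sub_eq_sqrt_of_norm_eq_one (norm_l2x hn) (norm_eq_one_of_mem_sensors he),
      inner_l2x_l2e, if_pos hn, mul_one_div]
  · rintro _ ⟨u, rfl⟩
    exact (hbounds u).1
  · show ‖l2x n - -l2e 0‖ = _
    rw [norm_sub_eq_sqrt_of_norm_eq_one (norm_l2x hn) (norm_eq_one_of_mem_sensors hne),
      inner_neg_right, inner_l2x_l2e, if_pos hn]
    ring_nf
  · rintro _ ⟨u, rfl⟩
    exact (hbounds u).2

theorem tendsto_sqrt_two_add_sub_sqrt_two_sub :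
    Tendsto (fun n : ℕ => √(2 + 2 / √n) - √(2 - 2 / √n)) atTop (𝓝 0) := by
  have h : Tendsto (fun n : ℕ => 2 / √n) atTop (𝓝 0) :=
    tendsto_const_nhds.div_atTop (Real.tendsto_sqrt_atTop.comp tendsto_natCast_atTop_atTop)
  have h2 : Tendsto (fun _ : ℕ => (2 : ℝ)) atTop (𝓝 2) := tendsto_const_nhds
  simpa using ((h2.add h).sqrt).sub ((h2.sub h).sqrt)

theorem stmt10 :
    (∀ n : ℕ, 0 < n →
      ‖l2x n‖ = 1 ∧
      (⨆ q : sensors × sensors,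
          |(1 - ‖l2x n - (q.1 : lp (fun _ : ℕ => ℝ) 2)‖) -
            (1 - ‖l2x n - (q.2 : lp (fun _ : ℕ => ℝ) 2)‖)|) =
        Real.sqrt (2 + 2 / Real.sqrt n) - Real.sqrt (2 - 2 / Real.sqrt n)) ∧
    Filter.Tendsto
      (fun n : ℕ => Real.sqrt (2 + 2 / Real.sqrt n) - Real.sqrt (2 - 2 / Real.sqrt n))
      Filter.atTop (nhds 0) := by
  refine ⟨fun n hn => ⟨norm_l2x hn, ?_⟩, tendsto_sqrt_two_add_sub_sqrt_two_sub⟩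
  obtain ⟨hmin, hmax⟩ := isLeast_isGreatest_norm_l2x_sub_sensors hn
  rw [← ciSup_abs_sub_eq_of_isLeast_of_isGreatest hmin hmax]
  exact iSup_congr fun q => by rw [sub_sub_sub_cancel_left, abs_sub_comm]
end

section
/- Let (X, ‖·‖) be a strictly convex normed space with dim X ≥ 2, s ∈ X with ‖s‖ ≥ 1, b = s/‖s‖, and r a unit vector with r ≠ b and r ≠ −b. If d₁, d₂ ≥ 1 satisfy ‖r − d₁ b‖ − d₁ = ‖r − d₂ b‖ − d₂, then d₁ = d₂. -/
/-! For `d₁ < d₂` the triangle inequality gives `‖r - d₂ • b‖ ≤ ‖r - d₁ • b‖ + (d₂ - d₁)`, and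
strict convexity makes it strict unless `r - d₁ • b` lies on the ray of `-b`. That would put the
unit vector `r` on the line `ℝ ∙ b`, i.e. `r = ±b`. So `d ↦ ‖r - d • b‖ - d` is strictly
decreasing, hence injective. -/

section

variable {X : Type*} [NormedAddCommGroup X] [NormedSpace ℝ X]

theorem notMem_span_singleton_of_norm_eq {b r : X} (hb : b ≠ 0) (hrb : ‖r‖ = ‖b‖)
    (hr₁ : r ≠ b) (hr₂ : r ≠ -b) : r ∉ ℝ ∙ b := by
  rintro hmem
  obtain ⟨a, rfl⟩ := Submodule.mem_span_singleton.mp hmem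
  have ha : |a| = 1 := by
    rw [norm_smul, Real.norm_eq_abs] at hrb
    exact (mul_eq_right₀ (norm_ne_zero_iff.mpr hb)).mp hrb
  rcases abs_eq zero_le_one |>.mp ha with rfl | rfl
  · exact hr₁ (one_smul ℝ b)
  · exact hr₂ (by rw [neg_one_smul])

theorem strictAnti_norm_sub_smul_sub [StrictConvexSpace ℝ X] {b r : X} (hb : ‖b‖ = 1)
    (hr : r ∉ ℝ ∙ b) : StrictAnti fun d : ℝ => ‖r - d • b‖ - d := by
  intro d₁ d₂ hlt
  have hsplit : r - d₂ • b = (r - d₁ • b) + (d₁ - d₂) • b := by module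
  have hnorm : ‖(d₁ - d₂) • b‖ = d₂ - d₁ := by
    rw [norm_smul, hb, mul_one, Real.norm_of_nonpos (by linarith)]
    ring
  have hne : (d₁ - d₂) • b ≠ 0 := by
    rw [← norm_ne_zero_iff, hnorm]
    linarith
  have hnot : ¬SameRay ℝ (r - d₁ • b) ((d₁ - d₂) • b) := by
    intro hray
    obtain ⟨t, -, ht⟩ := hray.exists_nonneg_right hne
    apply hr
    have hr' : r = (t * (d₁ - d₂) + d₁) • b := by
      rw [add_smul, mul_smul, ← ht]
      abel
    exact Submodule.mem_span_singleton.mpr ⟨_, hr'.symm⟩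
  have hlt' := norm_add_lt_of_not_sameRay hnot
  rw [← hsplit, hnorm] at hlt'
  simp only
  linarith

end

theorem stmt17_general {X : Type*} [NormedAddCommGroup X] [NormedSpace ℝ X]
    [StrictConvexSpace ℝ X]
    (s : X)
    (r : X) (hr : ‖r‖ = 1) (hrb : r ≠ ‖s‖⁻¹ • s) (hrb' : r ≠ -(‖s‖⁻¹ • s))
    (d₁ d₂ : ℝ)
    (heq : ‖r - d₁ • (‖s‖⁻¹ • s)‖ - d₁ = ‖r - d₂ • (‖s‖⁻¹ • s)‖ - d₂) :
    d₁ = d₂ := by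
  rcases eq_or_ne s 0 with rfl | hs
  · -- `‖0‖⁻¹ • 0 = 0`, so both sides reduce to `‖r‖ - dᵢ`
    simpa using heq
  have hb : ‖‖s‖⁻¹ • s‖ = 1 := norm_smul_inv_norm hs
  have hb₀ : ‖s‖⁻¹ • s ≠ 0 := ne_zero_of_norm_ne_zero (by rw [hb]; exact one_ne_zero)
  exact (strictAnti_norm_sub_smul_sub hb
    (notMem_span_singleton_of_norm_eq hb₀ (hr.trans hb.symm) hrb hrb')).injective heq

theorem stmt17 {X : Type*} [NormedAddCommGroup X] [NormedSpace ℝ X]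
    [StrictConvexSpace ℝ X] (hdim : 2 ≤ Module.rank ℝ X)
    (s : X) (hs : 1 ≤ ‖s‖)
    (r : X) (hr : ‖r‖ = 1) (hrb : r ≠ ‖s‖⁻¹ • s) (hrb' : r ≠ -(‖s‖⁻¹ • s))
    (d₁ d₂ : ℝ) (hd₁ : 1 ≤ d₁) (hd₂ : 1 ≤ d₂)
    (heq : ‖r - d₁ • (‖s‖⁻¹ • s)‖ - d₁ = ‖r - d₂ • (‖s‖⁻¹ • s)‖ - d₂) :
    d₁ = d₂ :=
  stmt17_general s r hr hrb hrb' d₁ d₂ heq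
end

section
/- In a strictly convex normed space with dim X ≥ 2, for s in the closed unit ball and the sensor set R = S[0;1] (the whole unit sphere) with t_r = t_0 + ‖s − r‖, the closed unit ball A = B[0;1] has the SDN property: for any x ∈ A with ‖x − s‖ ≥ δ > 0 one has D_∞(x) ≥ 2δ, where D_∞(x) = sup_{u,v ∈ R} |(t_u − ‖x − u‖) − (t_v − ‖x − v‖)|. -/
/-!
Extend the segment from `s` through `x` beyond `x` until it meets the unit sphere at `u`, and
beyond `s` until it meets the sphere at `w`. Since `x` lies between `s` and `u`, and `s` between
`x` and `w`, the sensor pair `(u, w)` alone gives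
`(‖s - u‖ - ‖x - u‖) - (‖s - w‖ - ‖x - w‖) = 2 ‖x - s‖`,
while the triangle inequality bounds every pair by the same quantity.
-/

open Metric

section NormedAddTorsor

variable {V P : Type*} [NormedAddCommGroup V] [NormedSpace ℝ V] [MetricSpace P]
  [NormedAddTorsor V P]

theorem exists_wbtw_mem_sphere {p q c : P} {ρ : ℝ} (hpq : p ≠ q) (hq : q ∈ closedBall c ρ) :
    ∃ u ∈ sphere c ρ, Wbtw ℝ p q u := by
  set v := q -ᵥ p
  have hv : 0 < ‖v‖ := norm_pos_iff.2 (vsub_ne_zero.2 hpq.symm)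
  set D := 1 + (ρ + dist p c) / ‖v‖
  have hD : 1 ≤ D := le_add_of_nonneg_right (by have := dist_nonneg.trans hq; positivity)
  have hfar : ρ ≤ dist (D • v +ᵥ p) c := by
    have hDv : D * ‖v‖ = ‖v‖ + (ρ + dist p c) := by
      simp only [D]
      field_simp
    calc ρ ≤ D * ‖v‖ - dist p c := by linarith
      _ = dist (D • v +ᵥ p) p - dist p c := by
        rw [dist_vadd_left, norm_smul, Real.norm_of_nonneg (by linarith)]
      _ ≤ dist (D • v +ᵥ p) c := by linarith [dist_triangle (D • v +ᵥ p) c p, dist_comm p c]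
  have hcont : Continuous fun d : ℝ => dist (d • v +ᵥ p) c := by fun_prop
  obtain ⟨d, ⟨hd1, -⟩, hd⟩ := intermediate_value_Icc hD hcont.continuousOn
    ⟨by simpa [v] using hq, hfar⟩
  refine ⟨d • v +ᵥ p, hd, ?_⟩
  simpa [v] using wbtw_smul_vadd_smul_vadd_of_nonneg_of_le p v zero_le_one hd1

theorem dist_sub_dist_sub_eq_two_mul_dist {s x u w : P} (hu : Wbtw ℝ s x u)
    (hw : Wbtw ℝ x s w) : (dist s u - dist x u) - (dist s w - dist x w) = 2 * dist s x := by
  rw [← hu.dist_add_dist, ← hw.dist_add_dist, dist_comm x s]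
  ring

end NormedAddTorsor

theorem abs_dist_sub_dist_sub_le {α : Type*} [PseudoMetricSpace α] (s x u w : α) :
    |(dist s u - dist x u) - (dist s w - dist x w)| ≤ 2 * dist s x := by
  linarith [abs_sub (dist s u - dist x u) (dist s w - dist x w), abs_dist_sub_le s x u,
    abs_dist_sub_le s x w]

theorem stmt18_general {X : Type*} [NormedAddCommGroup X] [NormedSpace ℝ X]
    (s x : X) (hs : ‖s‖ ≤ 1) (hx : ‖x‖ ≤ 1)
    (t0 δ : ℝ) (hδ : 0 < δ) (hxs : δ ≤ ‖x - s‖) :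
    2 * δ ≤
      ⨆ q : Metric.sphere (0 : X) 1 × Metric.sphere (0 : X) 1,
        |(t0 + ‖s - (q.1 : X)‖ - ‖x - (q.1 : X)‖) -
          (t0 + ‖s - (q.2 : X)‖ - ‖x - (q.2 : X)‖)| := by
  have hsx : s ≠ x := by
    rintro rfl
    simp only [sub_self, norm_zero] at hxs
    linarith
  obtain ⟨u, hu, hsxu⟩ := exists_wbtw_mem_sphere hsx (mem_closedBall_zero_iff.2 hx)
  obtain ⟨w, hw, hxsw⟩ := exists_wbtw_mem_sphere hsx.symm (mem_closedBall_zero_iff.2 hs)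
  have hcancel : ∀ a b c d : ℝ, (t0 + a - b) - (t0 + c - d) = (a - b) - (c - d) := by
    intro a b c d; ring
  simp only [hcancel, ← dist_eq_norm]
  refine le_ciSup_of_le ⟨2 * dist s x, ?_⟩ (⟨u, hu⟩, ⟨w, hw⟩) ?_
  · rintro _ ⟨q, rfl⟩
    exact abs_dist_sub_dist_sub_le _ _ _ _
  · rw [dist_sub_dist_sub_eq_two_mul_dist hsxu hxsw, dist_comm, dist_eq_norm,
      abs_of_nonneg (by positivity)]
    linarith

theorem stmt18 {X : Type*} [NormedAddCommGroup X] [NormedSpace ℝ X]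
    [StrictConvexSpace ℝ X] (hdim : 2 ≤ Module.rank ℝ X)
    (s x : X) (hs : ‖s‖ ≤ 1) (hx : ‖x‖ ≤ 1)
    (t0 δ : ℝ) (hδ : 0 < δ) (hxs : δ ≤ ‖x - s‖) :
    2 * δ ≤
      ⨆ q : Metric.sphere (0 : X) 1 × Metric.sphere (0 : X) 1,
        |(t0 + ‖s - (q.1 : X)‖ - ‖x - (q.1 : X)‖) -
          (t0 + ‖s - (q.2 : X)‖ - ‖x - (q.2 : X)‖)| :=
  stmt18_general s x hs hx t0 δ hδ hxs
end
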